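/- Let G be the subgroup of O(4) generated by the maximal torus T² (acting on S³ ⊂ ℂ² by (z, w) ↦ (e^{iθ₁}z, e^{iθ₂}w)) together with the coordinate-swap isometry (z, w) ↦ (w, z). Then the diameter of S³/G equals π/4; that is, the supremum over pairs p = (p₁,p₂), q = (q₁,q₂) ∈ S³ of the minimum of inf_{θ₁,θ₂} arccos(Re(e^{iθ₁}p₁·conj(q₁) + e^{iθ₂}p₂·conj(q₂))) and inf_{θ₁,θ₂} arccos(Re(e^{iθ₁}p₂·conj(q₁) + e^{iθ₂}p₁·conj(q₂))) equals π/4. -/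

import Mathlib

open Real Complex

/-!
Both torus orbit distances are computed explicitly: rotating each coordinate by the torus
aligns the two products `pᵢ q̄ⱼ` with the positive real axis, so the distance from the orbit
of `(p₁, p₂)` to `q` is `arccos (|p₁||q₁| + |p₂||q₂|)` and that of `(p₂, p₁)` is
`arccos (|p₂||q₁| + |p₁||q₂|)`. The sum of the squares of the two cosines is at least
`(|p₁|² + |p₂|²)(|q₁|² + |q₂|²) = 1`, so one of them is at least `√2/2` and the minimum of the
distances is at most `π/4`; equality holds for `p = (√2/2, √2/2)`, `q = (1, 0)`.
-/

lemma exp_neg_arg_mul_I_mul_self (z : ℂ) : exp ((-arg z : ℝ) * I) * z = ‖z‖ := by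
  rw [ofReal_neg, neg_mul, Complex.exp_neg, inv_mul_eq_iff_eq_mul₀ (Complex.exp_ne_zero _),
    mul_comm, norm_mul_exp_arg_mul_I]

lemma isLeast_arccos_re_exp_mul_I_add (a b : ℂ) :
    IsLeast {t : ℝ | ∃ θ₁ θ₂ : ℝ, t = arccos (exp (θ₁ * I) * a + exp (θ₂ * I) * b).re}
      (arccos (‖a‖ + ‖b‖)) := by
  refine ⟨⟨-arg a, -arg b, ?_⟩, ?_⟩
  · rw [exp_neg_arg_mul_I_mul_self, exp_neg_arg_mul_I_mul_self, ← ofReal_add, ofReal_re]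
  · rintro t ⟨θ₁, θ₂, rfl⟩
    apply arccos_le_arccos
    calc (exp (θ₁ * I) * a + exp (θ₂ * I) * b).re
        ≤ ‖exp (θ₁ * I) * a‖ + ‖exp (θ₂ * I) * b‖ := (re_le_norm _).trans (norm_add_le _ _)
      _ = ‖a‖ + ‖b‖ := by simp only [norm_mul, norm_exp_ofReal_mul_I, one_mul]

lemma sInf_torus_orbit_dist (p₁ p₂ q₁ q₂ : ℂ) :
    sInf {t : ℝ | ∃ θ₁ θ₂ : ℝ,
        t = arccos ((exp (θ₁ * I) * p₁ * (starRingEnd ℂ) q₁ +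
          exp (θ₂ * I) * p₂ * (starRingEnd ℂ) q₂).re)} =
      arccos (‖p₁‖ * ‖q₁‖ + ‖p₂‖ * ‖q₂‖) := by
  simp_rw [mul_assoc]
  rw [(isLeast_arccos_re_exp_mul_I_add _ _).csInf_eq, norm_mul, norm_mul, norm_conj, norm_conj]

lemma sq_add_sq_mul_sq_add_sq_le {a b c d : ℝ} (ha : 0 ≤ a) (hb : 0 ≤ b) (hc : 0 ≤ c)
    (hd : 0 ≤ d) :
    (a ^ 2 + b ^ 2) * (c ^ 2 + d ^ 2) ≤ (a * c + b * d) ^ 2 + (b * c + a * d) ^ 2 := by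
  nlinarith [mul_nonneg (mul_nonneg ha hb) (mul_nonneg hc hd)]

lemma sqrt_two_div_two_le_max_of_one_le_sq_add_sq {x y : ℝ} (hx : 0 ≤ x) (hy : 0 ≤ y)
    (h : 1 ≤ x ^ 2 + y ^ 2) :
    √2 / 2 ≤ max x y := by
  by_contra! hlt
  obtain ⟨hx', hy'⟩ := max_lt_iff.mp hlt
  have hs : (√2 / 2) ^ 2 = 1 / 2 := by rw [div_pow, sq_sqrt zero_le_two]; norm_num
  nlinarith [pow_lt_pow_left₀ hx' hx two_ne_zero, pow_lt_pow_left₀ hy' hy two_ne_zero]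

lemma arccos_sqrt_two_div_two : arccos (√2 / 2) = π / 4 := by
  rw [← cos_pi_div_four, arccos_cos (by positivity) (by linarith [pi_pos])]

lemma min_arccos_le_pi_div_four {a b c d : ℝ} (ha : 0 ≤ a) (hb : 0 ≤ b) (hc : 0 ≤ c)
    (hd : 0 ≤ d) (hab : a ^ 2 + b ^ 2 = 1) (hcd : c ^ 2 + d ^ 2 = 1) :
    min (arccos (a * c + b * d)) (arccos (b * c + a * d)) ≤ π / 4 := by
  have hsum := sq_add_sq_mul_sq_add_sq_le ha hb hc hd
  rw [hab, hcd, one_mul] at hsum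
  rw [← antitone_arccos.map_max, ← arccos_sqrt_two_div_two]
  exact arccos_le_arccos
    (sqrt_two_div_two_le_max_of_one_le_sq_add_sq (by positivity) (by positivity) hsum)

/-- Let `G ⊂ O(4)` be generated by the maximal torus
`(z, w) ↦ (e^{iθ₁}z, e^{iθ₂}w)` together with the swap `(z, w) ↦ (w, z)`.  Then the
diameter of `S³/G` equals `π/4`: the supremum over pairs `p, q ∈ S³ ⊂ ℂ²` of the minimum
of the two torus orbit distances (from `(p₁,p₂)` and from `(p₂,p₁)` to `q`) is `π/4`. -/
theorem diameter_S3_mod_torus_and_swap :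
    sSup {d : ℝ | ∃ p₁ p₂ q₁ q₂ : ℂ,
        ‖p₁‖ ^ 2 + ‖p₂‖ ^ 2 = 1 ∧
        ‖q₁‖ ^ 2 + ‖q₂‖ ^ 2 = 1 ∧
        d = min
          (sInf {t : ℝ | ∃ θ₁ θ₂ : ℝ,
            t = Real.arccos ((Complex.exp (θ₁ * Complex.I) * p₁ * (starRingEnd ℂ) q₁ +
              Complex.exp (θ₂ * Complex.I) * p₂ * (starRingEnd ℂ) q₂).re)})
          (sInf {t : ℝ | ∃ θ₁ θ₂ : ℝ,
            t = Real.arccos ((Complex.exp (θ₁ * Complex.I) * p₂ * (starRingEnd ℂ) q₁ +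
              Complex.exp (θ₂ * Complex.I) * p₁ * (starRingEnd ℂ) q₂).re)})} =
      π / 4 := by
  refine IsGreatest.csSup_eq ⟨?_, ?_⟩
  · have hr : ‖((√2 / 2 : ℝ) : ℂ)‖ = √2 / 2 := by
      rw [norm_real, Real.norm_of_nonneg (by positivity)]
    refine ⟨(√2 / 2 : ℝ), (√2 / 2 : ℝ), 1, 0, ?_, by simp, ?_⟩
    · rw [hr, div_pow, sq_sqrt zero_le_two]
      norm_num
    · simp only [sInf_torus_orbit_dist, hr, norm_one, norm_zero, mul_one, mul_zero, add_zero,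
        min_self, arccos_sqrt_two_div_two]
  · rintro d ⟨p₁, p₂, q₁, q₂, hp, hq, rfl⟩
    rw [sInf_torus_orbit_dist, sInf_torus_orbit_dist]
    exact min_arccos_le_pi_div_four (norm_nonneg _) (norm_nonneg _) (norm_nonneg _)
      (norm_nonneg _) hp hq
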